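/- Let L ∈ GL(m, ℝ) have all eigenvalues of modulus less than 1 and ε > 0, let b(x, n) := (L(x) + ε L_⊥(n), L_⊥(n)), and let M := {(x(n), n) : n ∈ S^{m−1}} with x(n) := ε Σ_{k=0}^∞ L^k(L_⊥^{-k}(n)). Then the restriction of b to M is topologically conjugate to L_⊥ : S^{m−1} → S^{m−1}, via the projection π(x, n) := n. -/

import Mathlib

/-!
Since the spectral radius of `L` is below `1`, Gelfand's formula makes `∑ ‖Lᵏ‖` finite. The
points `L_⊥^{-k}(n)` stay on the unit sphere, so the series defining `x(n)` converges uniformly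
there and `x` is continuous on the sphere: `M` is the graph of a continuous map over `S^{m-1}`,
and `π` is a homeomorphism from `M` onto the sphere. Splitting off the `k = 0` term of the series
for `x(L_⊥ n)` gives `x(L_⊥ n) = L x(n) + ε L_⊥ n`, i.e. `b` maps `(x(n), n)` to
`(x(L_⊥ n), L_⊥ n)`.
-/
noncomputable section
noncomputable section

/-- All (complex) eigenvalues of the real matrix `M` have modulus less than 1. -/
def specLt1 {m : ℕ} (M : Matrix (Fin m) (Fin m) ℝ) : Prop :=
  ∀ μ ∈ spectrum ℂ (M.map Complex.ofReal), ‖μ‖ < 1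

/-- The induced map `L_⊥(n) = (Lᵀ)⁻¹ n / ‖(Lᵀ)⁻¹ n‖` on unit normal vectors. -/
def Lperp {m : ℕ} (M : Matrix (Fin m) (Fin m) ℝ) (n : EuclideanSpace ℝ (Fin m)) :
    EuclideanSpace ℝ (Fin m) :=
  ‖Matrix.toEuclideanLin M.transpose⁻¹ n‖⁻¹ • Matrix.toEuclideanLin M.transpose⁻¹ n

/-- The inverse `L_⊥⁻¹(n) = Lᵀ n / ‖Lᵀ n‖`. -/
def LperpInv {m : ℕ} (M : Matrix (Fin m) (Fin m) ℝ) (n : EuclideanSpace ℝ (Fin m)) :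
    EuclideanSpace ℝ (Fin m) :=
  ‖Matrix.toEuclideanLin M.transpose n‖⁻¹ • Matrix.toEuclideanLin M.transpose n

/-- `x(n) = ε ∑ₖ L^k (L_⊥^{-k}(n))`. -/
def xBd {m : ℕ} (M : Matrix (Fin m) (Fin m) ℝ) (ε : ℝ) (n : EuclideanSpace ℝ (Fin m)) :
    EuclideanSpace ℝ (Fin m) :=
  ε • ∑' k : ℕ, (fun v => Matrix.toEuclideanLin M v)^[k] ((LperpInv M)^[k] n)

/-- The boundary map `b(x, n) = (L(x) + ε L_⊥(n), L_⊥(n))`. -/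
def bMap {m : ℕ} (M : Matrix (Fin m) (Fin m) ℝ) (ε : ℝ)
    (p : EuclideanSpace ℝ (Fin m) × EuclideanSpace ℝ (Fin m)) :
    EuclideanSpace ℝ (Fin m) × EuclideanSpace ℝ (Fin m) :=
  (Matrix.toEuclideanLin M p.1 + ε • Lperp M p.2, Lperp M p.2)
/-- The unit normal bundle of the attractor boundary:
`{(x(n), n) : n ∈ S^{m-1}}` as a subset of `ℝ^m × ℝ^m`. -/
def normalBundle {m : ℕ} (M : Matrix (Fin m) (Fin m) ℝ) (ε : ℝ) :
    Set (EuclideanSpace ℝ (Fin m) × EuclideanSpace ℝ (Fin m)) :=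
  {p | ‖p.2‖ = 1 ∧ p.1 = xBd M ε p.2}

open Filter Matrix Metric Set

theorem summable_norm_pow_of_spectralRadius_lt_one {A : Type*} [NormedRing A]
    [NormedAlgebra ℂ A] [CompleteSpace A] {a : A} (ha : spectralRadius ℂ a < 1) :
    Summable fun n => ‖a ^ n‖ := by
  obtain ⟨r, hρr, hr1⟩ := ENNReal.lt_iff_exists_nnreal_btwn.mp ha
  refine (summable_geometric_of_lt_one r.2 (mod_cast hr1)).of_norm_bounded_eventually_nat ?_
  filter_upwards [(spectrum.pow_nnnorm_pow_one_div_tendsto_nhds_spectralRadius a)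
    |>.eventually_lt_const hρr, eventually_gt_atTop 0] with n hn hn0
  rw [one_div, ENNReal.rpow_inv_lt_iff (by positivity), ENNReal.rpow_natCast] at hn
  rw [norm_norm]
  exact_mod_cast hn.le

theorem summable_norm_pow_of_forall_norm_lt_one {A : Type*} [NormedRing A]
    [NormedAlgebra ℂ A] [CompleteSpace A] {a : A} (ha : ∀ z ∈ spectrum ℂ a, ‖z‖ < 1) :
    Summable fun n => ‖a ^ n‖ := by
  cases subsingleton_or_nontrivial A with
  | inl _ => simp [Subsingleton.elim _ (0 : A)]
  | inr _ =>
    refine summable_norm_pow_of_spectralRadius_lt_one ?_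
    simpa using spectrum.spectralRadius_lt_of_forall_lt a (r := 1) fun z hz => mod_cast ha z hz

section
-- Any Banach algebra norm on complex matrices would do for Gelfand's formula; the `ℓ∞` operator
-- norm is used because it is visibly unchanged by `Complex.ofReal`.
open scoped Matrix.Norms.Operator

theorem Matrix.summable_norm_toEuclideanCLM_pow {ι : Type*} [Fintype ι] [DecidableEq ι]
    {M : Matrix ι ι ℝ} (hM : ∀ μ ∈ spectrum ℂ (M.map Complex.ofReal), ‖μ‖ < 1) :
    Summable fun k => ‖toEuclideanCLM (𝕜 := ℝ) M ^ k‖ := by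
  have hnorm : ∀ k, ‖(M.map Complex.ofReal) ^ k‖ = ‖M ^ k‖ := fun k => by
    rw [show M.map Complex.ofReal ^ k = (M ^ k).map Complex.ofReal from
      (M.map_pow Complex.ofRealHom k).symm]
    simp [linfty_opNorm_def]
  obtain ⟨C, -, hC⟩ := SemilinearMapClass.bound_of_continuous
    (toEuclideanCLM (𝕜 := ℝ) (n := ι)).toAlgEquiv.toLinearMap
    (LinearMap.continuous_of_finiteDimensional _)
  refine .of_nonneg_of_le (fun _ => norm_nonneg _) (fun k => ?_)
    ((summable_norm_pow_of_forall_norm_lt_one hM).mul_left C)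
  rw [hnorm, ← map_pow]
  exact hC (M ^ k)

end

section
variable {E : Type*} [NormedAddCommGroup E] [NormedSpace ℝ E] (T : E →L[ℝ] E)

theorem tsum_pow_apply_iterate_eq_add {f : E → E} {x y : E} (hxy : f y = x)
    (hx : Summable fun k => (T ^ k) (f^[k] x)) (hy : Summable fun k => (T ^ k) (f^[k] y)) :
    ∑' k, (T ^ k) (f^[k] y) = y + T (∑' k, (T ^ k) (f^[k] x)) := by
  rw [hy.tsum_eq_zero_add, T.map_tsum hx]
  simp [pow_succ', hxy]

variable [CompleteSpace E] {T}

theorem summable_pow_apply_of_norm_le_one (hT : Summable fun k => ‖T ^ k‖) {y : ℕ → E}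
    (hy : ∀ k, ‖y k‖ ≤ 1) : Summable fun k => (T ^ k) (y k) :=
  hT.of_norm_bounded fun k => (T ^ k).le_of_opNorm_le_of_le le_rfl (hy k) |>.trans_eq (mul_one _)

theorem continuous_tsum_pow_apply {X : Type*} [TopologicalSpace X]
    (hT : Summable fun k => ‖T ^ k‖) {y : ℕ → X → E} (hyc : ∀ k, Continuous (y k))
    (hy : ∀ k x, ‖y k x‖ ≤ 1) : Continuous fun x => ∑' k, (T ^ k) (y k x) :=
  continuous_tsum (fun k => (T ^ k).continuous.comp (hyc k)) hT
    fun k x => (T ^ k).le_of_opNorm_le_of_le le_rfl (hy k x) |>.trans_eq (mul_one _)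

end

section
variable {ι : Type*} [Fintype ι] [DecidableEq ι] {A : Matrix ι ι ℝ}

theorem Matrix.toEuclideanLin_nonsing_inv_apply_apply (hA : IsUnit A.det)
    (v : EuclideanSpace ℝ ι) : toEuclideanLin A⁻¹ (toEuclideanLin A v) = v := by
  simp [toLpLin_apply, mulVec_mulVec, nonsing_inv_mul _ hA]

theorem Matrix.toEuclideanLin_apply_nonsing_inv_apply (hA : IsUnit A.det)
    (v : EuclideanSpace ℝ ι) : toEuclideanLin A (toEuclideanLin A⁻¹ v) = v := by
  simp [toLpLin_apply, mulVec_mulVec, mul_nonsing_inv _ hA]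

theorem Matrix.toEuclideanLin_apply_ne_zero (hA : IsUnit A.det) {v : EuclideanSpace ℝ ι}
    (hv : v ≠ 0) : toEuclideanLin A v ≠ 0 := fun h0 => hv <| by
  rw [← toEuclideanLin_nonsing_inv_apply_apply hA v, h0, map_zero]

end

section
variable {m : ℕ}

theorem xBd_eq_tsum (M : Matrix (Fin m) (Fin m) ℝ) (ε : ℝ) (n : EuclideanSpace ℝ (Fin m)) :
    xBd M ε n = ε • ∑' k, (toEuclideanCLM (𝕜 := ℝ) M ^ k) ((LperpInv M)^[k] n) := by
  simp_rw [xBd, FunLike.coe_pow_eq_iterate]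
  rfl

variable {M : Matrix (Fin m) (Fin m) ℝ}

theorem norm_Lperp (hdet : IsUnit M.det) {n : EuclideanSpace ℝ (Fin m)} (hn : n ≠ 0) :
    ‖Lperp M n‖ = 1 := by
  have h := toEuclideanLin_apply_ne_zero (isUnit_nonsing_inv_det _ (isUnit_det_transpose _ hdet)) hn
  rw [Lperp, norm_smul, norm_inv, norm_norm, inv_mul_cancel₀ (norm_ne_zero_iff.mpr h)]

theorem norm_LperpInv (hdet : IsUnit M.det) {n : EuclideanSpace ℝ (Fin m)} (hn : n ≠ 0) :
    ‖LperpInv M n‖ = 1 := by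
  have h := toEuclideanLin_apply_ne_zero (isUnit_det_transpose _ hdet) hn
  rw [LperpInv, norm_smul, norm_inv, norm_norm, inv_mul_cancel₀ (norm_ne_zero_iff.mpr h)]

theorem LperpInv_Lperp (hdet : IsUnit M.det) {n : EuclideanSpace ℝ (Fin m)} (hn : ‖n‖ = 1) :
    LperpInv M (Lperp M n) = n := by
  have hdetT := isUnit_det_transpose _ hdet
  have hc : 0 < ‖toEuclideanLin Mᵀ⁻¹ n‖ := norm_pos_iff.mpr <|
    toEuclideanLin_apply_ne_zero (isUnit_nonsing_inv_det _ hdetT)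
      (norm_ne_zero_iff.mp (by simp [hn]))
  rw [Lperp, LperpInv, map_smul, toEuclideanLin_apply_nonsing_inv_apply hdetT, norm_smul, hn,
    mul_one, Real.norm_of_nonneg (inv_nonneg.mpr hc.le), inv_inv, smul_smul,
    mul_inv_cancel₀ hc.ne', one_smul]

theorem mapsTo_LperpInv_sphere (hdet : IsUnit M.det) :
    MapsTo (LperpInv M) (sphere 0 1) (sphere 0 1) := fun n hn => by
  rw [mem_sphere_zero_iff_norm] at hn ⊢
  exact norm_LperpInv hdet (norm_ne_zero_iff.mp (by simp [hn]))

theorem continuousOn_LperpInv (hdet : IsUnit M.det) : ContinuousOn (LperpInv M) {0}ᶜ := by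
  have hB : Continuous (toEuclideanLin Mᵀ) := LinearMap.continuous_of_finiteDimensional _
  exact (hB.norm.continuousOn.inv₀ fun n hn => norm_ne_zero_iff.mpr
    (toEuclideanLin_apply_ne_zero (isUnit_det_transpose _ hdet) hn)).smul hB.continuousOn

theorem continuous_iterate_LperpInv (hdet : IsUnit M.det) (k : ℕ) :
    Continuous fun n : sphere (0 : EuclideanSpace ℝ (Fin m)) 1 => (LperpInv M)^[k] n := by
  have hf := mapsTo_LperpInv_sphere hdet (M := M)
  have hc := (continuousOn_LperpInv hdet).mono (fun n hn => ne_zero_of_mem_unit_sphere ⟨n, hn⟩)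
    |>.mapsToRestrict hf
  have := continuous_subtype_val.comp (hc.iterate k)
  rwa [hf.iterate_restrict] at this

theorem norm_iterate_LperpInv (hdet : IsUnit M.det) {n : EuclideanSpace ℝ (Fin m)}
    (hn : ‖n‖ = 1) (k : ℕ) : ‖(LperpInv M)^[k] n‖ = 1 :=
  mem_sphere_zero_iff_norm.mp <|
    (mapsTo_LperpInv_sphere hdet).iterate k (mem_sphere_zero_iff_norm.mpr hn)

theorem summable_xBd_series (hdet : IsUnit M.det) (hspec : specLt1 M)
    {n : EuclideanSpace ℝ (Fin m)} (hn : ‖n‖ = 1) :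
    Summable fun k => (toEuclideanCLM (𝕜 := ℝ) M ^ k) ((LperpInv M)^[k] n) :=
  summable_pow_apply_of_norm_le_one (summable_norm_toEuclideanCLM_pow (M := M) hspec)
    fun k => (norm_iterate_LperpInv hdet hn k).le

theorem xBd_Lperp (hdet : IsUnit M.det) (hspec : specLt1 M) (ε : ℝ)
    {n : EuclideanSpace ℝ (Fin m)} (hn : ‖n‖ = 1) :
    xBd M ε (Lperp M n) = toEuclideanLin M (xBd M ε n) + ε • Lperp M n := by
  have hLn : ‖Lperp M n‖ = 1 := norm_Lperp hdet (norm_ne_zero_iff.mp (by simp [hn]))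
  rw [xBd_eq_tsum, xBd_eq_tsum, tsum_pow_apply_iterate_eq_add _ (LperpInv_Lperp hdet hn)
    (summable_xBd_series hdet hspec hn) (summable_xBd_series hdet hspec hLn), smul_add,
    add_comm, map_smul]
  rfl

theorem continuous_xBd_sphere (hdet : IsUnit M.det) (hspec : specLt1 M) (ε : ℝ) :
    Continuous fun n : sphere (0 : EuclideanSpace ℝ (Fin m)) 1 => xBd M ε n := by
  simp_rw [xBd_eq_tsum]
  exact (continuous_tsum_pow_apply (summable_norm_toEuclideanCLM_pow (M := M) hspec)
    (continuous_iterate_LperpInv hdet)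
    fun k n => (norm_iterate_LperpInv hdet (mem_sphere_zero_iff_norm.mp n.2) k).le).const_smul ε

theorem mapsTo_bMap_normalBundle (hdet : IsUnit M.det) (hspec : specLt1 M) (ε : ℝ) :
    MapsTo (bMap M ε) (normalBundle M ε) (normalBundle M ε) := by
  rintro ⟨x, n⟩ ⟨hn, hx : x = xBd M ε n⟩
  subst hx
  exact ⟨norm_Lperp hdet (norm_ne_zero_iff.mp (by simp [hn])),
    (xBd_Lperp hdet hspec ε hn).symm⟩

def normalBundleHomeomorphSphere (hdet : IsUnit M.det) (hspec : specLt1 M) (ε : ℝ) :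
    normalBundle M ε ≃ₜ sphere (0 : EuclideanSpace ℝ (Fin m)) 1 where
  toFun p := ⟨p.1.2, mem_sphere_zero_iff_norm.mpr p.2.1⟩
  invFun n := ⟨(xBd M ε n, n), mem_sphere_zero_iff_norm.mp n.2, rfl⟩
  left_inv := fun ⟨_, _, hx⟩ => Subtype.ext (Prod.ext hx.symm rfl)
  right_inv _ := rfl
  continuous_toFun := (continuous_snd.comp continuous_subtype_val).subtype_mk _
  continuous_invFun :=
    ((continuous_xBd_sphere hdet hspec ε).prodMk continuous_subtype_val).subtype_mk _

end

theorem stmt19_general {m : ℕ} (M : Matrix (Fin m) (Fin m) ℝ) (hdet : IsUnit M.det)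
    (hspec : specLt1 M) (ε : ℝ) :
    ∃ hb : ∀ p ∈ normalBundle M ε, bMap M ε p ∈ normalBundle M ε,
      ∃ h : normalBundle M ε ≃ₜ Metric.sphere (0 : EuclideanSpace ℝ (Fin m)) 1,
        (∀ p : normalBundle M ε, (h p : EuclideanSpace ℝ (Fin m)) = p.1.2) ∧
        (∀ p : normalBundle M ε,
          (h ⟨bMap M ε p.1, hb p.1 p.2⟩ : EuclideanSpace ℝ (Fin m)) =
            Lperp M p.1.2) :=
  ⟨fun _ hp => mapsTo_bMap_normalBundle hdet hspec ε hp,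
    normalBundleHomeomorphSphere hdet hspec ε, fun _ => rfl, fun _ => rfl⟩

/-- The restriction of the boundary map `b` to the invariant graph
`M = {(x(n), n) : n ∈ S^{m-1}}` is topologically conjugate to `L_⊥` on the sphere, via the
projection `π(x, n) = n`. -/
theorem stmt19 {m : ℕ} (M : Matrix (Fin m) (Fin m) ℝ) (hdet : IsUnit M.det)
    (hspec : specLt1 M) (ε : ℝ) (hε : 0 < ε) :
    ∃ hb : ∀ p ∈ normalBundle M ε, bMap M ε p ∈ normalBundle M ε,
      ∃ h : normalBundle M ε ≃ₜ Metric.sphere (0 : EuclideanSpace ℝ (Fin m)) 1,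
        (∀ p : normalBundle M ε, (h p : EuclideanSpace ℝ (Fin m)) = p.1.2) ∧
        (∀ p : normalBundle M ε,
          (h ⟨bMap M ε p.1, hb p.1 p.2⟩ : EuclideanSpace ℝ (Fin m)) =
            Lperp M p.1.2) :=
  stmt19_general M hdet hspec ε
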